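/- (Improved comparison.) Let (a0, a2) and (â0, â2) be two solutions of the ODE system (instA2) on [t*, T] ⊂ (0,∞) with a0(t*) < â0(t*) and a2(t*) > â2(t*) ≥ 0. Then for every t ∈ [t*, T] at which (a0, a2)(t) lies in R1 := {(a0,a2) : a0 < −1, 0 < a2 < 1}, the derivative of a2 − â2 at t is strictly positive; in particular a2 − â2 is strictly increasing on any subinterval of [t*, T] during which (a0, a2) remains in R1. -/

import Mathlib

open Set

/-- A solution of the ODE system (instA2), with `μ² = u1² − u0²`:
`a0' = −(4λ/μ²)(a2²(u1 − u0) + a0·u1 + u0)`, `a2' = −(3/(2λ))·a2·(a0 + 1)`. -/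
def IsSolInstA2 (u0 : ℝ) (lam u1 a0 a2 : ℝ → ℝ) (s : Set ℝ) : Prop :=
  ∀ t ∈ s,
    HasDerivAt a0 (-(4 * lam t / (u1 t ^ 2 - u0 ^ 2)) *
      (a2 t ^ 2 * (u1 t - u0) + a0 t * u1 t + u0)) t ∧
    HasDerivAt a2 (-(3 / (2 * lam t)) * a2 t * (a0 t + 1)) t


/-- A scalar linear ODE with bounded coefficient and zero initial value has zero solution. -/
lemma lin_ode_zero {f c : ℝ → ℝ} {K a b : ℝ}
    (hf : ∀ t ∈ Icc a b, HasDerivAt f (c t * f t) t)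
    (hc : ∀ t ∈ Icc a b, |c t| ≤ K)
    (ha : f a = 0) : ∀ t ∈ Icc a b, f t = 0 := by
  intro t ht
  have hcont : ContinuousOn f (Icc a b) := fun s hs =>
    (hf s hs).continuousAt.continuousWithinAt
  have h := norm_le_gronwallBound_of_norm_deriv_right_le (f' := fun t => c t * f t)
    (δ := 0) (K := K) (ε := 0) hcont
    (fun s hs => (hf s (Ico_subset_Icc_self hs)).hasDerivWithinAt)
    (by simp [ha])
    (fun s hs => by
      rw [Real.norm_eq_abs, Real.norm_eq_abs, abs_mul, add_zero]
      exact mul_le_mul_of_nonneg_right (hc s (Ico_subset_Icc_self hs)) (abs_nonneg _)) t ht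
  rw [gronwallBound_ε0_δ0, Real.norm_eq_abs] at h
  exact abs_eq_zero.mp (le_antisymm h (abs_nonneg _))

/-- Positivity persists under the differential inequality `f' ≥ -K f`. -/
lemma pos_persist {f f' : ℝ → ℝ} {K a b : ℝ} (hab : a ≤ b)
    (hf : ∀ t ∈ Icc a b, HasDerivAt f (f' t) t)
    (hpos : 0 < f a) (hineq : ∀ t ∈ Icc a b, -(K * f t) ≤ f' t) : 0 < f b := by
  have hgd : ∀ t ∈ Icc a b,
      HasDerivAt (fun t => f t * Real.exp (K * t)) ((f' t + K * f t) * Real.exp (K * t)) t := by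
    intro t ht
    have hexp : HasDerivAt (fun t : ℝ => Real.exp (K * t)) (Real.exp (K * t) * (K * 1)) t :=
      (Real.hasDerivAt_exp (K * t)).comp t ((hasDerivAt_id t).const_mul K)
    have h1 := (hf t ht).mul hexp
    exact h1.congr_deriv (by ring)
  have hmono : MonotoneOn (fun t => f t * Real.exp (K * t)) (Icc a b) := by
    apply monotoneOn_of_deriv_nonneg (convex_Icc a b)
      (fun t ht => (hgd t ht).continuousAt.continuousWithinAt)
      (fun t ht => ((hgd t (interior_subset ht)).differentiableAt).differentiableWithinAt)
    intro t ht
    rw [(hgd t (interior_subset ht)).deriv]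
    have h2 := hineq t (interior_subset ht)
    have h3 := (Real.exp_pos (K * t)).le
    nlinarith
  have h4 : f a * Real.exp (K * a) ≤ f b * Real.exp (K * b) :=
    hmono (left_mem_Icc.mpr hab) (right_mem_Icc.mpr hab) hab
  have h5 := Real.exp_pos (K * a)
  have h6 := Real.exp_pos (K * b)
  by_contra hnb
  push_neg at hnb
  have h7 : f b * Real.exp (K * b) ≤ 0 := mul_nonpos_iff.mpr (Or.inr ⟨hnb, h6.le⟩)
  nlinarith [mul_pos hpos h5]

/-- Nonnegativity on `[a,b)` passes to `b` by continuity. -/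
lemma nonneg_at_right {f : ℝ → ℝ} {a b : ℝ} (hab : a < b) (hc : ContinuousAt f b)
    (h : ∀ r ∈ Ico a b, 0 ≤ f r) : 0 ≤ f b := by
  haveI hne : (nhdsWithin b (Ico a b)).NeBot := by
    rw [← mem_closure_iff_nhdsWithin_neBot, closure_Ico hab.ne]
    exact right_mem_Icc.mpr hab.le
  exact ge_of_tendsto (hc.continuousWithinAt) (eventually_mem_nhdsWithin.mono h)

lemma comparison_instA2 (u0 : ℝ) (lam u1 : ℝ → ℝ)
    (hlamc : ContinuousOn lam (Ioi 0))
    (hlam : ∀ t ∈ Ioi (0 : ℝ), 0 < lam t)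
    (hu1' : ∀ t ∈ Ioi (0 : ℝ), HasDerivAt u1 (2 * lam t) t)
    (hu1 : ∀ t ∈ Ioi (0 : ℝ), |u0| < u1 t)
    (a0 a2 b0 b2 : ℝ → ℝ) (tstar T : ℝ) (hts : 0 < tstar) (htT : tstar ≤ T)
    (hsola : IsSolInstA2 u0 lam u1 a0 a2 (Icc tstar T))
    (hsolb : IsSolInstA2 u0 lam u1 b0 b2 (Icc tstar T))
    (h0 : a0 tstar < b0 tstar) (h2 : a2 tstar > b2 tstar) (h2' : 0 ≤ b2 tstar) :
    ∀ t ∈ Icc tstar T, a0 t < b0 t ∧ b2 t < a2 t ∧ 0 ≤ b2 t := by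
  have hsub : Icc tstar T ⊆ Ioi (0:ℝ) := fun t ht => lt_of_lt_of_le hts ht.1
  -- basic pointwise facts
  have hlam' : ∀ t ∈ Icc tstar T, 0 < lam t := fun t ht => hlam t (hsub ht)
  have hu1pos : ∀ t ∈ Icc tstar T, 0 < u1 t := fun t ht =>
    lt_of_le_of_lt (abs_nonneg u0) (hu1 t (hsub ht))
  have hu1u0 : ∀ t ∈ Icc tstar T, 0 < u1 t - u0 := fun t ht => by
    have := hu1 t (hsub ht); have := le_abs_self u0; linarith
  have hmu : ∀ t ∈ Icc tstar T, 0 < u1 t ^ 2 - u0 ^ 2 := fun t ht => by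
    have h := hu1 t (hsub ht)
    have h1 := le_abs_self u0
    have h2 := neg_abs_le u0
    nlinarith
  -- continuity
  have hconta0 : ContinuousOn a0 (Icc tstar T) := fun t ht =>
    (hsola t ht).1.continuousAt.continuousWithinAt
  have hconta2 : ContinuousOn a2 (Icc tstar T) := fun t ht =>
    (hsola t ht).2.continuousAt.continuousWithinAt
  have hcontb0 : ContinuousOn b0 (Icc tstar T) := fun t ht =>
    (hsolb t ht).1.continuousAt.continuousWithinAt
  have hcontb2 : ContinuousOn b2 (Icc tstar T) := fun t ht =>
    (hsolb t ht).2.continuousAt.continuousWithinAt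
  have hcontu1 : ContinuousOn u1 (Icc tstar T) := fun t ht =>
    (hu1' t (hsub ht)).continuousAt.continuousWithinAt
  have hcontlam : ContinuousOn lam (Icc tstar T) := hlamc.mono hsub
  -- the bound K
  have hFcont : ContinuousOn (fun t => |3 / (2 * lam t) * (b0 t + 1)| +
      |4 * lam t * u1 t / (u1 t ^ 2 - u0 ^ 2)| +
      |3 / (2 * lam t) * (a0 t + 1)|) (Icc tstar T) := by
    apply ContinuousOn.add
    apply ContinuousOn.add
    · exact ((continuousOn_const.div (continuousOn_const.mul hcontlam)
        (fun t ht => by have := hlam' t ht; show 2 * lam t ≠ 0; positivity)).mul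
        (hcontb0.add continuousOn_const)).abs
    · exact (((continuousOn_const.mul hcontlam).mul hcontu1).div
        ((hcontu1.pow 2).sub continuousOn_const)
        (fun t ht => (hmu t ht).ne')).abs
    · exact ((continuousOn_const.div (continuousOn_const.mul hcontlam)
        (fun t ht => by have := hlam' t ht; show 2 * lam t ≠ 0; positivity)).mul
        (hconta0.add continuousOn_const)).abs
  obtain ⟨K, hK⟩ := isCompact_Icc.exists_bound_of_continuousOn hFcont
  have hK1 : ∀ t ∈ Icc tstar T, |3 / (2 * lam t) * (b0 t + 1)| ≤ K := by
    intro t ht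
    have := le_trans (le_abs_self _) (hK t ht)
    have h1 := abs_nonneg (4 * lam t * u1 t / (u1 t ^ 2 - u0 ^ 2))
    have h2 := abs_nonneg (3 / (2 * lam t) * (a0 t + 1))
    linarith
  have hK2 : ∀ t ∈ Icc tstar T, |4 * lam t * u1 t / (u1 t ^ 2 - u0 ^ 2)| ≤ K := by
    intro t ht
    have := le_trans (le_abs_self _) (hK t ht)
    have h1 := abs_nonneg (3 / (2 * lam t) * (b0 t + 1))
    have h2 := abs_nonneg (3 / (2 * lam t) * (a0 t + 1))
    linarith
  have hK3 : ∀ t ∈ Icc tstar T, |3 / (2 * lam t) * (a0 t + 1)| ≤ K := by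
    intro t ht
    have := le_trans (le_abs_self _) (hK t ht)
    have h1 := abs_nonneg (3 / (2 * lam t) * (b0 t + 1))
    have h2 := abs_nonneg (4 * lam t * u1 t / (u1 t ^ 2 - u0 ^ 2))
    linarith
  -- Step A : b2 is nonnegative on the whole interval
  have hb2ode : ∀ t ∈ Icc tstar T,
      HasDerivAt b2 ((-(3 / (2 * lam t)) * (b0 t + 1)) * b2 t) t := by
    intro t ht
    have := (hsolb t ht).2
    convert this using 1; ring
  have hcbound : ∀ t ∈ Icc tstar T, |(-(3 / (2 * lam t)) * (b0 t + 1))| ≤ K := by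
    intro t ht
    have h : (-(3 / (2 * lam t)) * (b0 t + 1)) = -(3 / (2 * lam t) * (b0 t + 1)) := by ring
    rw [h, abs_neg]
    exact hK1 t ht
  have hb2nn : ∀ t ∈ Icc tstar T, 0 ≤ b2 t := by
    rcases eq_or_lt_of_le h2' with heq | hlt
    · intro t ht
      rw [lin_ode_zero hb2ode hcbound heq.symm t ht]
    · intro t ht
      by_contra hneg
      push_neg at hneg
      obtain ⟨t0, ht0mem, hb2t0⟩ := intermediate_value_Icc' ht.1
        (hcontb2.mono (Icc_subset_Icc_right ht.2)) ⟨hneg.le, hlt.le⟩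
      have ht0sub : Icc tstar t0 ⊆ Icc tstar T :=
        Icc_subset_Icc_right (le_trans ht0mem.2 ht.2)
      -- reversed time
      have hgode : ∀ s ∈ Icc tstar t0,
          HasDerivAt (fun s => b2 (tstar + t0 - s))
            ((3 / (2 * lam (tstar + t0 - s)) * (b0 (tstar + t0 - s) + 1)) *
              b2 (tstar + t0 - s)) s := by
        intro s hs
        have hmem : tstar + t0 - s ∈ Icc tstar t0 := ⟨by linarith [hs.2], by linarith [hs.1]⟩
        have hinner : HasDerivAt (fun s : ℝ => tstar + t0 - s) (-1) s := by
          exact (hasDerivAt_id' s).const_sub (tstar + t0)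
        have := (hb2ode _ (ht0sub hmem)).comp s hinner
        exact this.congr_deriv (by ring)
      have hgbound : ∀ s ∈ Icc tstar t0,
          |(3 / (2 * lam (tstar + t0 - s)) * (b0 (tstar + t0 - s) + 1))| ≤ K := by
        intro s hs
        have hmem : tstar + t0 - s ∈ Icc tstar t0 := ⟨by linarith [hs.2], by linarith [hs.1]⟩
        exact hK1 _ (ht0sub hmem)
      have hz := lin_ode_zero hgode hgbound (by simpa using hb2t0) t0
        (right_mem_Icc.mpr ht0mem.1)
      simp at hz
      rw [hz] at hlt
      exact lt_irrefl _ hlt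
  -- derivative expressions for the differences
  have hxode : ∀ t ∈ Icc tstar T, HasDerivAt (fun r => b0 r - a0 r)
      (-(4 * lam t / (u1 t ^ 2 - u0 ^ 2)) *
        (b2 t ^ 2 * (u1 t - u0) + b0 t * u1 t + u0) -
       -(4 * lam t / (u1 t ^ 2 - u0 ^ 2)) *
        (a2 t ^ 2 * (u1 t - u0) + a0 t * u1 t + u0)) t :=
    fun t ht => (hsolb t ht).1.sub (hsola t ht).1
  have hyode : ∀ t ∈ Icc tstar T, HasDerivAt (fun r => a2 r - b2 r)
      (-(3 / (2 * lam t)) * a2 t * (a0 t + 1) -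
       -(3 / (2 * lam t)) * b2 t * (b0 t + 1)) t :=
    fun t ht => (hsola t ht).2.sub (hsolb t ht).2
  -- the differential inequalities, valid where the weak inequalities hold
  have hxineq : ∀ t ∈ Icc tstar T, 0 ≤ b0 t - a0 t → 0 ≤ a2 t - b2 t →
      -(K * (b0 t - a0 t)) ≤
        -(4 * lam t / (u1 t ^ 2 - u0 ^ 2)) *
          (b2 t ^ 2 * (u1 t - u0) + b0 t * u1 t + u0) -
        -(4 * lam t / (u1 t ^ 2 - u0 ^ 2)) *
          (a2 t ^ 2 * (u1 t - u0) + a0 t * u1 t + u0) := by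
    intro t ht hx hy
    have hl := hlam' t ht
    have hm := hmu t ht
    have hu := hu1u0 t ht
    have hb2 := hb2nn t ht
    have key : -(4 * lam t / (u1 t ^ 2 - u0 ^ 2)) *
          (b2 t ^ 2 * (u1 t - u0) + b0 t * u1 t + u0) -
        -(4 * lam t / (u1 t ^ 2 - u0 ^ 2)) *
          (a2 t ^ 2 * (u1 t - u0) + a0 t * u1 t + u0) =
        (4 * lam t / (u1 t ^ 2 - u0 ^ 2)) * ((a2 t ^ 2 - b2 t ^ 2) * (u1 t - u0)) -
        (4 * lam t * u1 t / (u1 t ^ 2 - u0 ^ 2)) * (b0 t - a0 t) := by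
      field_simp
      ring
    rw [key]
    have hP : 0 < 4 * lam t / (u1 t ^ 2 - u0 ^ 2) := by positivity
    have hsq : 0 ≤ a2 t ^ 2 - b2 t ^ 2 := by nlinarith
    have h1 : 0 ≤ (4 * lam t / (u1 t ^ 2 - u0 ^ 2)) * ((a2 t ^ 2 - b2 t ^ 2) * (u1 t - u0)) :=
      mul_nonneg hP.le (mul_nonneg hsq hu.le)
    have h2 : (4 * lam t * u1 t / (u1 t ^ 2 - u0 ^ 2)) * (b0 t - a0 t) ≤ K * (b0 t - a0 t) :=
      mul_le_mul_of_nonneg_right (le_trans (le_abs_self _) (hK2 t ht)) hx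
    linarith
  have hyineq : ∀ t ∈ Icc tstar T, 0 ≤ b0 t - a0 t → 0 ≤ a2 t - b2 t →
      -(K * (a2 t - b2 t)) ≤
        -(3 / (2 * lam t)) * a2 t * (a0 t + 1) -
        -(3 / (2 * lam t)) * b2 t * (b0 t + 1) := by
    intro t ht hx hy
    have hl := hlam' t ht
    have hb2 := hb2nn t ht
    have key : -(3 / (2 * lam t)) * a2 t * (a0 t + 1) -
        -(3 / (2 * lam t)) * b2 t * (b0 t + 1) =
        (3 / (2 * lam t)) * b2 t * (b0 t - a0 t) -
        (3 / (2 * lam t) * (a0 t + 1)) * (a2 t - b2 t) := by ring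
    rw [key]
    have hQ : 0 ≤ 3 / (2 * lam t) := by positivity
    have h1 : 0 ≤ (3 / (2 * lam t)) * b2 t * (b0 t - a0 t) :=
      mul_nonneg (mul_nonneg hQ hb2) hx
    have h2 : (3 / (2 * lam t) * (a0 t + 1)) * (a2 t - b2 t) ≤ K * (a2 t - b2 t) :=
      mul_le_mul_of_nonneg_right (le_trans (le_abs_self _) (hK3 t ht)) hy
    linarith
  -- continuous induction
  set S : Set ℝ := {t | t ∈ Icc tstar T ∧ ∀ r ∈ Icc tstar t, a0 r < b0 r ∧ b2 r < a2 r}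
    with hS
  have htstarS : tstar ∈ S := by
    refine ⟨left_mem_Icc.mpr htT, fun r hr => ?_⟩
    have : r = tstar := le_antisymm hr.2 hr.1
    rw [this]; exact ⟨h0, h2⟩
  have hSne : S.Nonempty := ⟨tstar, htstarS⟩
  have hSbdd : BddAbove S := ⟨T, fun s hs => hs.1.2⟩
  set t0 := sSup S with ht0def
  have ht0mem : t0 ∈ Icc tstar T :=
    ⟨le_csSup hSbdd htstarS, csSup_le hSne fun s hs => hs.1.2⟩
  have hpre : ∀ r ∈ Ico tstar t0, a0 r < b0 r ∧ b2 r < a2 r := by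
    intro r hr
    obtain ⟨s, hsS, hrs⟩ := exists_lt_of_lt_csSup hSne hr.2
    exact hsS.2 r ⟨hr.1, hrs.le⟩
  have hweakx : 0 ≤ b0 t0 - a0 t0 := by
    rcases eq_or_lt_of_le ht0mem.1 with heq | hlt
    · rw [← heq]; linarith
    · exact nonneg_at_right (f := fun r => b0 r - a0 r) hlt ((hsolb t0 ht0mem).1.sub (hsola t0 ht0mem).1).continuousAt
        (fun r hr => by
          have := (hpre r hr).1
          simp only [sub_nonneg]
          linarith)
  have hweaky : 0 ≤ a2 t0 - b2 t0 := by
    rcases eq_or_lt_of_le ht0mem.1 with heq | hlt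
    · rw [← heq]; linarith
    · exact nonneg_at_right (f := fun r => a2 r - b2 r) hlt ((hsola t0 ht0mem).2.sub (hsolb t0 ht0mem).2).continuousAt
        (fun r hr => by
          have := (hpre r hr).2
          simp only [sub_nonneg]
          linarith)
  have hwk : ∀ r ∈ Icc tstar t0, 0 ≤ b0 r - a0 r ∧ 0 ≤ a2 r - b2 r := by
    intro r hr
    rcases lt_or_eq_of_le hr.2 with hlt | heq
    · have := hpre r ⟨hr.1, hlt⟩
      constructor <;> linarith [this.1, this.2]
    · rw [heq]; exact ⟨hweakx, hweaky⟩
  have ht0sub : Icc tstar t0 ⊆ Icc tstar T := Icc_subset_Icc_right ht0mem.2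
  have hx0pos : 0 < b0 t0 - a0 t0 := by
    apply pos_persist (f := fun r => b0 r - a0 r) ht0mem.1
      (fun r hr => hxode r (ht0sub hr))
      (by simpa using sub_pos.mpr h0)
    intro r hr
    exact hxineq r (ht0sub hr) (hwk r hr).1 (hwk r hr).2
  have hy0pos : 0 < a2 t0 - b2 t0 := by
    apply pos_persist (f := fun r => a2 r - b2 r) ht0mem.1
      (fun r hr => hyode r (ht0sub hr))
      (by simpa using sub_pos.mpr h2)
    intro r hr
    exact hyineq r (ht0sub hr) (hwk r hr).1 (hwk r hr).2
  have hIcc_t0 : ∀ r ∈ Icc tstar t0, a0 r < b0 r ∧ b2 r < a2 r := by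
    intro r hr
    rcases lt_or_eq_of_le hr.2 with hlt | heq
    · exact hpre r ⟨hr.1, hlt⟩
    · rw [heq]; constructor <;> linarith
  have ht0T : t0 = T := by
    by_contra hne
    have hlt : t0 < T := lt_of_le_of_ne ht0mem.2 hne
    have hcx : ContinuousAt (fun r => b0 r - a0 r) t0 :=
      ((hsolb t0 ht0mem).1.sub (hsola t0 ht0mem).1).continuousAt
    have hcy : ContinuousAt (fun r => a2 r - b2 r) t0 :=
      ((hsola t0 ht0mem).2.sub (hsolb t0 ht0mem).2).continuousAt
    have hev : ∀ᶠ r in nhds t0, 0 < b0 r - a0 r ∧ 0 < a2 r - b2 r :=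
      (hcx.eventually (eventually_gt_nhds hx0pos)).and
        (hcy.eventually (eventually_gt_nhds hy0pos))
    rw [Metric.eventually_nhds_iff] at hev
    obtain ⟨ε, hε, hball⟩ := hev
    set t1 := min (t0 + ε / 2) T with ht1def
    have ht01 : t0 < t1 := lt_min (by linarith) hlt
    have ht1S : t1 ∈ S := by
      refine ⟨⟨le_trans ht0mem.1 ht01.le, min_le_right _ _⟩, fun r hr => ?_⟩
      rcases le_or_gt r t0 with h | h
      · exact hIcc_t0 r ⟨hr.1, h⟩
      · have hd : dist r t0 < ε := by
          rw [Real.dist_eq, abs_of_pos (sub_pos.mpr h)]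
          have : r ≤ t0 + ε / 2 := le_trans hr.2 (min_le_left _ _)
          linarith
        obtain ⟨hx, hy⟩ := hball hd
        constructor <;> linarith
    have := le_csSup hSbdd ht1S
    rw [← ht0def] at this
    linarith
  intro t ht
  have := hIcc_t0 t ⟨ht.1, ht0T ▸ ht.2⟩
  exact ⟨this.1, this.2, hb2nn t ht⟩

/-- Improved comparison: if `(a0, a2)` and `(â0, â2)` are two solutions of (instA2) on
`[t*, T] ⊂ (0,∞)` with `a0(t*) < â0(t*)` and `a2(t*) > â2(t*) ≥ 0`, then at every
`t ∈ [t*, T]` at which `(a0, a2)(t)` lies in `R1 = {a0 < −1, 0 < a2 < 1}` the derivative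
of `a2 − â2` is strictly positive; in particular `a2 − â2` is strictly increasing on any
subinterval of `[t*, T]` during which `(a0, a2)` remains in `R1`. -/
theorem improved_comparison_instA2 (u0 : ℝ) (lam u1 : ℝ → ℝ)
    (hlamc : ContinuousOn lam (Ioi 0))
    (hlam : ∀ t ∈ Ioi (0 : ℝ), 0 < lam t)
    (hu1' : ∀ t ∈ Ioi (0 : ℝ), HasDerivAt u1 (2 * lam t) t)
    (hu1 : ∀ t ∈ Ioi (0 : ℝ), |u0| < u1 t)
    (a0 a2 b0 b2 : ℝ → ℝ) (tstar T : ℝ) (hts : 0 < tstar) (htT : tstar ≤ T)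
    (hsola : IsSolInstA2 u0 lam u1 a0 a2 (Icc tstar T))
    (hsolb : IsSolInstA2 u0 lam u1 b0 b2 (Icc tstar T))
    (h0 : a0 tstar < b0 tstar) (h2 : a2 tstar > b2 tstar) (h2' : 0 ≤ b2 tstar) :
    (∀ t ∈ Icc tstar T, (a0 t < -1 ∧ 0 < a2 t ∧ a2 t < 1) →
      0 < deriv (fun r => a2 r - b2 r) t) ∧
    (∀ s ∈ Icc tstar T, ∀ u ∈ Icc tstar T, s < u →
      (∀ r ∈ Icc s u, a0 r < -1 ∧ 0 < a2 r ∧ a2 r < 1) →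
      a2 s - b2 s < a2 u - b2 u) := by
  have hcomp := comparison_instA2 u0 lam u1 hlamc hlam hu1' hu1 a0 a2 b0 b2 tstar T hts htT
    hsola hsolb h0 h2 h2'
  have key : ∀ t ∈ Icc tstar T, (a0 t < -1 ∧ 0 < a2 t ∧ a2 t < 1) →
      0 < deriv (fun r => a2 r - b2 r) t := by
    intro t ht hR1
    obtain ⟨hc0, hc2, hc2'⟩ := hcomp t ht
    have hl : 0 < lam t := hlam t (lt_of_lt_of_le hts ht.1)
    have hd : HasDerivAt (fun r => a2 r - b2 r)
        (-(3 / (2 * lam t)) * a2 t * (a0 t + 1) -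
         -(3 / (2 * lam t)) * b2 t * (b0 t + 1)) t :=
      (hsola t ht).2.sub (hsolb t ht).2
    rw [hd.deriv]
    have hQ : 0 < 3 / (2 * lam t) := by positivity
    have hkey : a2 t * (a0 t + 1) < b2 t * (b0 t + 1) := by
      nlinarith [mul_nonneg hc2' (sub_pos.mpr hc0).le,
        mul_pos (sub_pos.mpr hc2) (show (0:ℝ) < -(a0 t + 1) by linarith [hR1.1])]
    have : -(3 / (2 * lam t)) * a2 t * (a0 t + 1) -
        -(3 / (2 * lam t)) * b2 t * (b0 t + 1) =
        (3 / (2 * lam t)) * (b2 t * (b0 t + 1) - a2 t * (a0 t + 1)) := by ring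
    rw [this]
    exact mul_pos hQ (sub_pos.mpr hkey)
  refine ⟨key, ?_⟩
  intro s hs u hu hsu hR1
  have hsubIcc : Icc s u ⊆ Icc tstar T := Icc_subset_Icc hs.1 hu.2
  have hmono : StrictMonoOn (fun r => a2 r - b2 r) (Icc s u) := by
    apply strictMonoOn_of_deriv_pos (convex_Icc s u)
    · intro r hr
      exact ((hsola r (hsubIcc hr)).2.sub (hsolb r (hsubIcc hr)).2).continuousAt.continuousWithinAt
    · intro r hr
      rw [interior_Icc] at hr
      have hrmem : r ∈ Icc s u := ⟨hr.1.le, hr.2.le⟩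
      exact key r (hsubIcc hrmem) (hR1 r hrmem)
  exact hmono (left_mem_Icc.mpr hsu.le) (right_mem_Icc.mpr hsu.le) hsu
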